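/- Let V₊ ⊆ 𝔡 be a generalized metric with V₋ := V₊^⊥, and assume dim V₊ ≠ 1 and dim V₋ ≠ 1. Then for every linear functional δ : 𝔡 → ℝ there exists a connection ∇ on 𝔡 which preserves the splitting (∇ₓ(V₊) ⊆ V₊ for all x ∈ 𝔡), is torsion-free (T_∇ = 0), and has prescribed divergence Div_∇ = δ, i.e., Tr(x ↦ ∇ₓy) = δ(y) for all y ∈ 𝔡. -/

import Mathlib

/-- A subspace on which the bilinear form is positive definite. -/
def IsPosDefOn {E : Type*} [AddCommGroup E] [Module ℝ E]
    (B : E →ₗ[ℝ] E →ₗ[ℝ] ℝ) (V : Submodule ℝ E) : Prop :=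
  ∀ x ∈ V, x ≠ 0 → 0 < B x x

/-- A generalized metric: a maximal positive-definite subspace. -/
def IsGenMetric {E : Type*} [AddCommGroup E] [Module ℝ E]
    (B : E →ₗ[ℝ] E →ₗ[ℝ] ℝ) (V : Submodule ℝ E) : Prop :=
  IsPosDefOn B V ∧ ∀ W : Submodule ℝ E, V ≤ W → IsPosDefOn B W → W = V

/-- A (metric) connection on a quadratic Lie algebra: a bilinear map `∇` with
`⟨∇ₓy,z⟩ + ⟨y,∇ₓz⟩ = 0`. -/
def IsConnection {𝔡 : Type*} [LieRing 𝔡] [LieAlgebra ℝ 𝔡]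
    (B : 𝔡 →ₗ[ℝ] 𝔡 →ₗ[ℝ] ℝ) (D : 𝔡 →ₗ[ℝ] 𝔡 →ₗ[ℝ] 𝔡) : Prop :=
  ∀ x y z : 𝔡, B (D x y) z + B y (D x z) = 0

/-!
Split `x = x₊ + x₋` along `𝔡 = V₊ ⊕ V₋` (`V₊` is definite, hence nondegenerate). The connection
`∇⁰ₓy = ⁅x₋, y₊⁆₊ + ⁅x₊, y₋⁆₋ + ⅓ ⁅x₊, y₊⁆₊ + ⅓ ⁅x₋, y₋⁆₋` is metric, preserves the splitting and
is torsion-free, because `⟨⁅a, b⁆, c⟩` is totally skew. Adding the tensors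
`(x, y) ↦ ⟨x±, y⟩ e± - ⟨e±, y⟩ x±` with `e± ∈ V±` keeps all three properties and changes the
divergence by `(1 - dim V±) ⟨e±, ·⟩`; as `dim V± ≠ 1`, the vectors `e±` can be chosen to absorb
`δ - Div ∇⁰`.
-/

open LinearMap (BilinForm)
open Module (finrank)

noncomputable section

section Module

variable {K M : Type*} [Field K] [AddCommGroup M] [Module K M]

def divergence (D : M →ₗ[K] M →ₗ[K] M) : Module.Dual K M :=
  LinearMap.trace K M ∘ₗ D.flip

lemma divergence_add (D A : M →ₗ[K] M →ₗ[K] M) :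
    divergence (D + A) = divergence D + divergence A := by
  ext y
  exact map_add (LinearMap.trace K M) (D.flip y) (A.flip y)

namespace LinearMap.BilinForm

variable {B : BilinForm K M} {p q : Submodule K M}

lemma isSelfAdjoint_projection (hB : B.IsSymm) (hpq : IsCompl p q)
    (horth : ∀ u ∈ p, ∀ v ∈ q, B u v = 0) : B.IsSelfAdjoint (p.projection q hpq) := by
  intro x y
  have hx := Submodule.projection_add_projection_eq_self hpq x
  have hy := Submodule.projection_add_projection_eq_self hpq y
  calc B (p.projection q hpq x) y
      = B (p.projection q hpq x) (p.projection q hpq y) := by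
        conv_lhs => rw [← hy]
        rw [map_add, horth _ (p.projection_apply_mem hpq x) _ (q.projection_apply_mem _ y),
          add_zero]
    _ = B x (p.projection q hpq y) := by
        conv_rhs => rw [← hx]
        rw [map_add, LinearMap.add_apply, hB.eq (q.projection p hpq.symm x),
          horth _ (p.projection_apply_mem hpq y) _ (q.projection_apply_mem _ x), add_zero]

lemma trace_projection [FiniteDimensional K M] (hpq : IsCompl p q) :
    LinearMap.trace K M (p.projection q hpq) = finrank K p :=
  IsProj.trace ⟨fun _ ↦ by simp, fun _ ↦ Submodule.projection_apply_of_mem_left hpq⟩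

/-- `x ↦ π x ∧ e`, identifying `a ∧ e` with the skew map `y ↦ B a y • e - B e y • a`. -/
def wedgeTensor (B : BilinForm K M) (π : Module.End K M) (e : M) : M →ₗ[K] M →ₗ[K] M :=
  LinearMap.mk₂ K (fun x y ↦ B (π x) y • e - B e y • π x)
    (fun _ _ _ ↦ by simp only [map_add, LinearMap.add_apply, add_smul, smul_add]; abel)
    (fun _ _ _ ↦ by simp only [map_smul, LinearMap.smul_apply, smul_eq_mul, mul_smul,
      smul_sub, smul_comm _ (B e _)])
    (fun _ _ _ ↦ by simp only [map_add, add_smul]; abel)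
    (fun _ _ _ ↦ by simp only [map_smul, smul_eq_mul, mul_smul, smul_sub])

@[simp]
lemma wedgeTensor_apply (π : Module.End K M) (e x y : M) :
    B.wedgeTensor π e x y = B (π x) y • e - B e y • π x :=
  rfl

lemma wedgeTensor_skew (hB : B.IsSymm) (π : Module.End K M) (e x y z : M) :
    B (B.wedgeTensor π e x y) z + B y (B.wedgeTensor π e x z) = 0 := by
  simp only [wedgeTensor_apply, map_sub, map_smul, LinearMap.sub_apply, LinearMap.smul_apply,
    smul_eq_mul, hB.eq y]
  ring

lemma wedgeTensor_torsion_eq_zero (hB : B.IsSymm) {π : Module.End K M} (hπ : B.IsSelfAdjoint π)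
    (e x y z : M) :
    B (B.wedgeTensor π e x y - B.wedgeTensor π e y x) z + B (B.wedgeTensor π e z x) y = 0 := by
  have h (a b : M) : B a (π b) = B b (π a) := by rw [← hπ, hB.eq]
  simp only [wedgeTensor_apply, map_sub, map_smul, LinearMap.sub_apply, LinearMap.smul_apply,
    smul_eq_mul, hπ _ _]
  linear_combination B e z * h x y - B e y * h x z + B e x * h y z

lemma wedgeTensor_mem (hpq : IsCompl p q) {e : M} (he : e ∈ p) (x y : M) :
    B.wedgeTensor (p.projection q hpq) e x y ∈ p := by
  simp only [wedgeTensor_apply]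
  exact sub_mem (p.smul_mem _ he) (p.smul_mem _ (by simp))

lemma wedgeTensor_eq_zero (hB : B.IsSymm) (hpq : IsCompl p q)
    (horth : ∀ u ∈ p, ∀ v ∈ q, B u v = 0) {e : M} (he : e ∈ p) (x : M) {y : M} (hy : y ∈ q) :
    B.wedgeTensor (p.projection q hpq) e x y = 0 := by
  rw [wedgeTensor_apply, BilinForm.isSelfAdjoint_projection hB hpq horth,
    (Submodule.projection_apply_eq_zero_iff hpq).2 hy, horth e he y hy]
  simp

lemma divergence_wedgeTensor [FiniteDimensional K M] (hpq : IsCompl p q) {e : M} (he : e ∈ p)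
    (y : M) :
    divergence (B.wedgeTensor (p.projection q hpq) e) y = (1 - finrank K p) * B e y := by
  have : (B.wedgeTensor (p.projection q hpq) e).flip y =
      (B.flip y ∘ₗ p.projection q hpq).smulRight e - B e y • p.projection q hpq := by
    ext x; simp
  rw [divergence, LinearMap.comp_apply, this, map_sub, LinearMap.trace_smulRight, map_smul,
    trace_projection]
  simp [Submodule.projection_apply_of_mem_left hpq he]
  ring

end LinearMap.BilinForm

end Module

lemma IsPosDefOn.isCompl_orthogonal {E : Type*} [AddCommGroup E] [Module ℝ E]
    [FiniteDimensional ℝ E] {B : BilinForm ℝ E} {V : Submodule ℝ E} (hB : B.IsRefl)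
    (hV : IsPosDefOn B V) : IsCompl V (B.orthogonal V) :=
  (B.restrict_nondegenerate_iff_isCompl_orthogonal hB).1 <|
    B.nondegenerate_restrict_of_disjoint_orthogonal hB <| Submodule.disjoint_def.2
      fun x hxV hxV' ↦ by_contra fun hx ↦ (hV x hxV hx).ne' (hxV' x hxV)

section LieAlgebra

variable {L : Type*} [LieRing L] [LieAlgebra ℝ L] {B : BilinForm ℝ L}

def IsTorsionFree (B : BilinForm ℝ L) (D : L →ₗ[ℝ] L →ₗ[ℝ] L) : Prop :=
  ∀ x y z : L, B (D x y - D y x - ⁅x, y⁆) z + B (D z x) y = 0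

lemma IsConnection.add {D A : L →ₗ[ℝ] L →ₗ[ℝ] L} (hD : IsConnection B D)
    (hA : IsConnection B A) : IsConnection B (D + A) := by
  intro x y z
  simp only [LinearMap.add_apply, map_add]
  linear_combination hD x y z + hA x y z

lemma IsConnection.smul {D : L →ₗ[ℝ] L →ₗ[ℝ] L} (hD : IsConnection B D) (c : ℝ) :
    IsConnection B (c • D) := by
  intro x y z
  simp only [LinearMap.smul_apply, map_smul, smul_eq_mul]
  linear_combination c * hD x y z

lemma IsTorsionFree.add {D A : L →ₗ[ℝ] L →ₗ[ℝ] L} (hD : IsTorsionFree B D)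
    (hA : ∀ x y z, B (A x y - A y x) z + B (A z x) y = 0) : IsTorsionFree B (D + A) := by
  intro x y z
  have hDxyz := hD x y z
  simp only [LinearMap.add_apply, map_add, map_sub, LinearMap.sub_apply] at hDxyz hA ⊢
  linear_combination hDxyz + hA x y z

def projBracket (R S : Module.End ℝ L) : L →ₗ[ℝ] L →ₗ[ℝ] L :=
  LinearMap.mk₂ ℝ (fun x y ↦ R ⁅S x, R y⁆)
    (fun _ _ _ ↦ by simp only [map_add, add_lie])
    (fun _ _ _ ↦ by simp only [map_smul, smul_lie])
    (fun _ _ _ ↦ by simp only [map_add, lie_add])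
    (fun _ _ _ ↦ by simp only [map_smul, lie_smul])

@[simp]
lemma projBracket_apply (R S : Module.End ℝ L) (x y : L) : projBracket R S x y = R ⁅S x, R y⁆ :=
  rfl

lemma isConnection_projBracket (hinv : B.lieInvariant L) {R : Module.End ℝ L}
    (hR : B.IsSelfAdjoint R) (S : Module.End ℝ L) : IsConnection B (projBracket R S) := by
  intro x y z
  rw [projBracket_apply, projBracket_apply, hR, hinv, ← hR y]
  ring

variable {p q : Submodule ℝ L}

/-- The connection `∇⁰`, with `x₊ ∈ p` and `x₋ ∈ q`; the factor `⅓` is the one for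
which `x ↦ ⅓ ad x` is torsion-free. -/
def canonicalConnection (hpq : IsCompl p q) : L →ₗ[ℝ] L →ₗ[ℝ] L :=
  projBracket (p.projection q hpq) (q.projection p hpq.symm) +
    projBracket (q.projection p hpq.symm) (p.projection q hpq) +
    (3⁻¹ : ℝ) • (projBracket (p.projection q hpq) (p.projection q hpq) +
      projBracket (q.projection p hpq.symm) (q.projection p hpq.symm))

variable (hB : B.IsSymm) (hinv : B.lieInvariant L) (hpq : IsCompl p q)
  (horth : ∀ u ∈ p, ∀ v ∈ q, B u v = 0)
include hB hinv hpq horth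

lemma isConnection_canonicalConnection : IsConnection B (canonicalConnection hpq) := by
  have hP := BilinForm.isSelfAdjoint_projection hB hpq horth
  have hQ := BilinForm.isSelfAdjoint_projection hB hpq.symm fun v hv u hu ↦
    (hB.eq u v).symm.trans (horth u hu v hv)
  exact (((isConnection_projBracket hinv hP _).add (isConnection_projBracket hinv hQ _)).add
    (((isConnection_projBracket hinv hP _).add (isConnection_projBracket hinv hQ _)).smul _))

lemma isTorsionFree_canonicalConnection : IsTorsionFree B (canonicalConnection hpq) := by
  set P := p.projection q hpq
  set Q := q.projection p hpq.symm
  have hP := BilinForm.isSelfAdjoint_projection hB hpq horth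
  have hQ := BilinForm.isSelfAdjoint_projection hB hpq.symm fun v hv u hu ↦
    (hB.eq u v).symm.trans (horth u hu v hv)
  have skew (a b c : L) : B ⁅a, b⁆ c = -B ⁅b, a⁆ c := by
    rw [← lie_skew, map_neg, LinearMap.neg_apply]
  have cyc (a b c : L) : B ⁅a, b⁆ c = B ⁅c, a⁆ b := by
    rw [hinv, hB.eq, ← skew]
  intro x y z
  have hbracket : B ⁅x, y⁆ z = B ⁅P x, P y⁆ (P z) + B ⁅P x, P y⁆ (Q z) +
      B ⁅P x, Q y⁆ (P z) + B ⁅P x, Q y⁆ (Q z) + B ⁅Q x, P y⁆ (P z) +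
      B ⁅Q x, P y⁆ (Q z) + B ⁅Q x, Q y⁆ (P z) + B ⁅Q x, Q y⁆ (Q z) := by
    conv_lhs => rw [← Submodule.projection_add_projection_eq_self hpq x,
      ← Submodule.projection_add_projection_eq_self hpq y,
      ← Submodule.projection_add_projection_eq_self hpq z]
    simp only [add_lie, lie_add, map_add, LinearMap.add_apply]
    ring
  simp only [canonicalConnection, LinearMap.add_apply, LinearMap.smul_apply, projBracket_apply,
    map_add, map_sub, map_smul, LinearMap.sub_apply, smul_eq_mul, hP _ _, hQ _ _, hbracket]
  linear_combination -skew (Q y) (P x) (P z) - skew (P y) (Q x) (Q z)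
    - cyc (P x) (P y) (Q z) - cyc (Q x) (Q y) (P z)
    - 3⁻¹ * skew (P y) (P x) (P z) - 3⁻¹ * cyc (P x) (P y) (P z)
    - 3⁻¹ * skew (Q y) (Q x) (Q z) - 3⁻¹ * cyc (Q x) (Q y) (Q z)

omit hB hinv horth in
lemma canonicalConnection_mem (x : L) {y : L} (hy : y ∈ p) : canonicalConnection hpq x y ∈ p := by
  have hQy : q.projection p hpq.symm y = 0 := (Submodule.projection_apply_eq_zero_iff _).2 hy
  simp only [canonicalConnection, LinearMap.add_apply, LinearMap.smul_apply, projBracket_apply,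
    hQy, lie_zero, map_zero, add_zero]
  exact add_mem (p.projection_apply_mem hpq _) (p.smul_mem _ (p.projection_apply_mem hpq _))

end LieAlgebra

theorem exists_isConnection_isTorsionFree_divergence_eq {L : Type*} [LieRing L] [LieAlgebra ℝ L]
    [FiniteDimensional ℝ L] {B : BilinForm ℝ L} (hB : B.IsSymm) (hnd : B.Nondegenerate)
    (hinv : B.lieInvariant L) {p q : Submodule ℝ L} (hpq : IsCompl p q)
    (horth : ∀ u ∈ p, ∀ v ∈ q, B u v = 0) (hp : finrank ℝ p ≠ 1) (hq : finrank ℝ q ≠ 1)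
    (δ : Module.Dual ℝ L) :
    ∃ D, IsConnection B D ∧ (∀ x, ∀ y ∈ p, D x y ∈ p) ∧ IsTorsionFree B D ∧ divergence D = δ := by
  have horth' : ∀ v ∈ q, ∀ u ∈ p, B v u = 0 := fun v hv u hu ↦
    (hB.eq u v).symm.trans (horth u hu v hv)
  set P := p.projection q hpq
  set Q := q.projection p hpq.symm
  set D₀ := canonicalConnection hpq
  -- `B u = δ - Div ∇⁰`, and `e₁, e₂` are scaled so that the corrections contribute `B (P u + Q u)`
  set u := (B.toDual hnd).symm (δ - divergence D₀)
  set e₁ := (1 - finrank ℝ p : ℝ)⁻¹ • P u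
  set e₂ := (1 - finrank ℝ q : ℝ)⁻¹ • Q u
  have he₁ : e₁ ∈ p := p.smul_mem _ (p.projection_apply_mem hpq u)
  have he₂ : e₂ ∈ q := q.smul_mem _ (q.projection_apply_mem hpq.symm u)
  refine ⟨D₀ + B.wedgeTensor P e₁ + B.wedgeTensor Q e₂, ?_, ?_, ?_, ?_⟩
  · exact ((isConnection_canonicalConnection hB hinv hpq horth).add
      (B.wedgeTensor_skew hB P e₁)).add (B.wedgeTensor_skew hB Q e₂)
  · intro x y hy
    rw [LinearMap.add_apply, LinearMap.add_apply, LinearMap.add_apply,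
      B.wedgeTensor_eq_zero hB hpq.symm horth' he₂ x hy, add_zero]
    exact add_mem (canonicalConnection_mem hpq x hy) (B.wedgeTensor_mem hpq he₁ x y)
  · exact ((isTorsionFree_canonicalConnection hB hinv hpq horth).add
      (B.wedgeTensor_torsion_eq_zero hB (B.isSelfAdjoint_projection hB hpq horth) e₁)).add
      (B.wedgeTensor_torsion_eq_zero hB (B.isSelfAdjoint_projection hB hpq.symm horth') e₂)
  · have hp' : (1 - finrank ℝ p : ℝ) ≠ 0 := sub_ne_zero.2 (mod_cast hp.symm)
    have hq' : (1 - finrank ℝ q : ℝ) ≠ 0 := sub_ne_zero.2 (mod_cast hq.symm)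
    ext y
    calc divergence (D₀ + B.wedgeTensor P e₁ + B.wedgeTensor Q e₂) y
        = divergence D₀ y + B (P u) y + B (Q u) y := by
          rw [divergence_add, divergence_add, LinearMap.add_apply, LinearMap.add_apply,
            B.divergence_wedgeTensor hpq he₁, B.divergence_wedgeTensor hpq.symm he₂]
          simp only [e₁, e₂, map_smul, LinearMap.smul_apply, smul_eq_mul]
          field_simp
      _ = divergence D₀ y + B u y := by
          rw [add_assoc, ← LinearMap.add_apply, ← map_add,
            Submodule.projection_add_projection_eq_self]
      _ = δ y := by simp [u]

end

/-- If `dim V₊ ≠ 1` and `dim V₋ ≠ 1`, then for every linear functional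
`δ` on a quadratic Lie algebra `𝔡` there exists a connection which preserves the
splitting, is torsion-free and has prescribed divergence `δ`. -/
theorem exists_leviCivita_with_prescribed_divergence
    {𝔡 : Type*} [LieRing 𝔡] [LieAlgebra ℝ 𝔡] [FiniteDimensional ℝ 𝔡]
    (B : 𝔡 →ₗ[ℝ] 𝔡 →ₗ[ℝ] ℝ)
    (hsymm : ∀ x y : 𝔡, B x y = B y x)
    (hnondeg : ∀ x : 𝔡, (∀ y : 𝔡, B x y = 0) → x = 0)
    (hinv : ∀ x y z : 𝔡, B ⁅x, y⁆ z = B x ⁅y, z⁆)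
    (Vp : Submodule ℝ 𝔡) (hVp : IsGenMetric B Vp)
    (hp : Module.finrank ℝ Vp ≠ 1)
    (hm : Module.finrank ℝ (LinearMap.BilinForm.orthogonal B Vp) ≠ 1)
    (δ : 𝔡 →ₗ[ℝ] ℝ) :
    ∃ D : 𝔡 →ₗ[ℝ] 𝔡 →ₗ[ℝ] 𝔡, IsConnection B D ∧
      (∀ x : 𝔡, ∀ y ∈ Vp, D x y ∈ Vp) ∧
      (∀ x y z : 𝔡, B (D x y - D y x - ⁅x, y⁆) z + B (D z x) y = 0) ∧
      (∀ y : 𝔡, LinearMap.trace ℝ 𝔡 (D.flip y) = δ y) := by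
  have hB : BilinForm.IsSymm B := ⟨hsymm⟩
  have hnd : BilinForm.Nondegenerate B :=
    (LinearMap.IsRefl.nondegenerate_iff_separatingLeft hB.isRefl).2 hnondeg
  have hlie : BilinForm.lieInvariant 𝔡 B := fun x y z ↦ by
    rw [← lie_skew, map_neg, LinearMap.neg_apply, hinv]
  obtain ⟨D, hD, hpres, htors, hdiv⟩ := exists_isConnection_isTorsionFree_divergence_eq hB hnd
    hlie (hVp.1.isCompl_orthogonal hB.isRefl) (fun u hu v hv ↦ hv u hu) hp hm δ
  exact ⟨D, hD, hpres, htors, LinearMap.congr_fun hdiv⟩
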